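/- arXiv:2308.09856 — 5 statements merged into one kernel-verified Lean document; each statement's English description precedes it below -/
import Mathlib

section
/- Let (A,E) be a C*-probability space with filtration (A_t)_{t≥0}, and let p,q ∈ [1,∞] satisfy 1/p + 1/q ≤ 1. If M : ℝ≥0 → L^p(A,E) ∩ L^q(A,E) is a martingale that is continuous with respect to the L^p-norm and has locally bounded variation with respect to the L^q-norm, then M is constant: M(t) = M(0) for all t ≥ 0. -/
/-!
`H` models `L²(A,E)`, `V t` the subspaces `L²(A_t,E)` (on which conditional expectations act as
orthogonal projections), and `Np`, `Nq` the `L^p`- and `L^q`-norms; `hHolder` is Hölder's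
inequality `‖x‖₂² = ‖x⋆x‖₁ ≤ ‖x‖_p ‖x‖_q`.

Martingale increments are orthogonal, so for every partition of `[0,t]` Pythagoras gives
`‖M t - M 0‖₂² = ∑ ‖ΔM‖₂² ≤ ∑ ‖ΔM‖_p ‖ΔM‖_q`. On a fine enough partition uniform
`L^p`-continuity on the compact `[0,t]` makes every `‖ΔM‖_p < ε`, while the `L^q`-variation bound
keeps `∑ ‖ΔM‖_q ≤ C`. Hence `‖M t - M 0‖₂² ≤ ε C` for all `ε > 0`.
-/

open scoped NNReal ENNReal

open Finset Metric Filter Topology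

theorem Fin.sum_univ_succ_sub_castSucc {G : Type*} [AddCommGroup G] {n : ℕ}
    (g : Fin (n + 1) → G) :
    ∑ i : Fin n, (g i.succ - g i.castSucc) = g (Fin.last n) - g 0 := by
  induction n with
  | zero => simp
  | succ n ih =>
    rw [Fin.sum_univ_castSucc]
    simp_rw [Fin.succ_castSucc]
    rw [ih fun i => g i.castSucc]
    simp

theorem Submodule.norm_sub_sq_eq_of_orthogonalProjectionOnto_eq {𝕜 E : Type*} [RCLike 𝕜]
    [NormedAddCommGroup E] [InnerProductSpace 𝕜 E] (K : Submodule 𝕜 E)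
    [K.HasOrthogonalProjection] {x y : E} (h : (K.orthogonalProjectionOnto x : E) = y) :
    ‖x - y‖ ^ 2 = ‖x‖ ^ 2 - ‖y‖ ^ 2 := by
  have hy : y ∈ K := h ▸ (K.orthogonalProjectionOnto x).2
  have hxy : x - y ∈ Kᗮ := by
    simpa [Submodule.starProjection_apply, h] using K.sub_starProjection_mem_orthogonal x
  have hpyth := norm_add_sq_eq_norm_sq_add_norm_sq_of_inner_eq_zero (x - y) y
    ((K.mem_orthogonal' _).1 hxy y hy)
  rw [sub_add_cancel] at hpyth
  linear_combination -hpyth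

theorem sum_norm_sq_le_mul_sum {ι H : Type*} [SeminormedAddCommGroup H] {Np Nq : H → ℝ}
    (hNq_nonneg : ∀ x, 0 ≤ Nq x) (hHolder : ∀ x : H, ‖x‖ ^ 2 ≤ Np x * Nq x)
    (s : Finset ι) (f : ι → H) {ε : ℝ} (hε : ∀ i ∈ s, Np (f i) ≤ ε) :
    ∑ i ∈ s, ‖f i‖ ^ 2 ≤ ε * ∑ i ∈ s, Nq (f i) := by
  rw [mul_sum]
  refine sum_le_sum fun i hi => (hHolder (f i)).trans ?_
  exact mul_le_mul_of_nonneg_right (hε i hi) (hNq_nonneg _)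

theorem exists_pos_forall_dist_lt_of_isCompact {X E : Type*} [PseudoMetricSpace X] [AddGroup E]
    {N : E → ℝ} (hN_neg : ∀ x, N (-x) = N x) (hN_add : ∀ x y, N (x + y) ≤ N x + N y)
    {f : X → E} {s : Set X} (hs : IsCompact s)
    (hf : ∀ x ∈ s, ∀ ε > (0 : ℝ), ∃ δ > (0 : ℝ), ∀ y, dist y x < δ → N (f y - f x) < ε)
    {ε : ℝ} (hε : 0 < ε) :
    ∃ δ > 0, ∀ x ∈ s, ∀ y, dist y x < δ → N (f y - f x) < ε := by
  choose δ hδ hfδ using fun (x : s) => hf x x.2 (ε / 2) (half_pos hε)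
  obtain ⟨η, hη, hcover⟩ := lebesgue_number_lemma_of_metric hs
    (c := fun x : s => ball (x : X) (δ x)) (fun _ => isOpen_ball)
    fun x hx => Set.mem_iUnion.2 ⟨⟨x, hx⟩, mem_ball_self (hδ _)⟩
  refine ⟨η, hη, fun x hx y hy => ?_⟩
  obtain ⟨z, hz⟩ := hcover x hx
  have hxz := hfδ z x (hz (mem_ball_self hη))
  have hyz := hfδ z y (hz hy)
  calc N (f y - f x) = N ((f y - f z) + -(f x - f z)) := by rw [neg_sub, sub_add_sub_cancel]
    _ ≤ N (f y - f z) + N (f x - f z) := by rw [← hN_neg (f x - f z)]; exact hN_add _ _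
    _ < ε := by linarith

theorem NNReal.exists_partition_dist_lt (t : ℝ≥0) {δ : ℝ} (hδ : 0 < δ) :
    ∃ (n : ℕ) (u : Fin (n + 1) → ℝ≥0), Monotone u ∧ u 0 = 0 ∧ u (Fin.last n) = t ∧
      ∀ i : Fin n, dist (u i.succ) (u i.castSucc) < δ := by
  set n := ⌈(t : ℝ) / δ⌉₊ + 1
  have hn : (0 : ℝ) < n := by positivity
  refine ⟨n, fun i => t * (i : ℕ) / n, fun i j hij => ?_, by simp, ?_, fun i => ?_⟩
  · dsimp only
    gcongr
    exact_mod_cast hij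
  · simp only [Fin.val_last]
    exact mul_div_cancel_right₀ t (by positivity)
  · rw [NNReal.dist_eq]
    simp only [Fin.val_succ, Fin.val_castSucc]
    push_cast
    have hstep : (t : ℝ) * ((i : ℕ) + 1) / n - t * (i : ℕ) / n = t / n := by ring
    rw [hstep, abs_of_nonneg (by positivity), div_lt_iff₀ hn, ← div_lt_iff₀' hδ]
    exact (Nat.le_ceil _).trans_lt (by norm_cast; omega)

section ProjectionMartingale

variable {𝕜 H ι : Type*} [RCLike 𝕜] [NormedAddCommGroup H] [InnerProductSpace 𝕜 H] [Preorder ι]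
  {V : ι → Submodule 𝕜 H} [∀ i, (V i).HasOrthogonalProjection] {M : ι → H}

variable (V) in
def IsProjectionMartingale (M : ι → H) : Prop :=
  ∀ s t, s ≤ t → ((V s).orthogonalProjectionOnto (M t) : H) = M s

theorem IsProjectionMartingale.norm_sub_sq (hmart : IsProjectionMartingale V M) {s t : ι}
    (hst : s ≤ t) : ‖M t - M s‖ ^ 2 = ‖M t‖ ^ 2 - ‖M s‖ ^ 2 :=
  (V s).norm_sub_sq_eq_of_orthogonalProjectionOnto_eq (hmart s t hst)

theorem IsProjectionMartingale.sum_norm_sub_sq (hmart : IsProjectionMartingale V M) {n : ℕ}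
    {u : Fin (n + 1) → ι} (hu : Monotone u) :
    ∑ i : Fin n, ‖M (u i.succ) - M (u i.castSucc)‖ ^ 2 =
      ‖M (u (Fin.last n)) - M (u 0)‖ ^ 2 := by
  simp_rw [hmart.norm_sub_sq (hu (Fin.castSucc_le_succ _)),
    hmart.norm_sub_sq (hu (Fin.zero_le _))]
  exact Fin.sum_univ_succ_sub_castSucc fun i => ‖M (u i)‖ ^ 2

end ProjectionMartingale

theorem continuous_finite_variation_martingale_constant_general
    {H : Type*} [NormedAddCommGroup H] [InnerProductSpace ℂ H]
    (V : ℝ≥0 → Submodule ℂ H) [∀ t, CompleteSpace (V t)]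
    (Np Nq : H → ℝ)
    (hNq_nonneg : ∀ x, 0 ≤ Nq x)
    (hNp_neg : ∀ x, Np (-x) = Np x)
    (hNp_add : ∀ x y, Np (x + y) ≤ Np x + Np y)
    (hHolder : ∀ x : H, ‖x‖ ^ 2 ≤ Np x * Nq x)
    (M : ℝ≥0 → H)
    (hmart : ∀ s t : ℝ≥0, s ≤ t → ((V s).orthogonalProjectionOnto (M t) : H) = M s)
    (hcont : ∀ t : ℝ≥0, ∀ ε > (0 : ℝ), ∃ δ > (0 : ℝ), ∀ s : ℝ≥0,
      dist s t < δ → Np (M s - M t) < ε)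
    (hBV : ∀ t : ℝ≥0, ∃ C : ℝ, ∀ (n : ℕ) (u : Fin (n + 1) → ℝ≥0),
      Monotone u → u 0 = 0 → u (Fin.last n) = t →
      ∑ i : Fin n, Nq (M (u i.succ) - M (u i.castSucc)) ≤ C)
    (t : ℝ≥0) :
    M t = M 0 := by
  obtain ⟨C, hC⟩ := hBV t
  have hsmall : ∀ ε > 0, ‖M t - M 0‖ ^ 2 ≤ ε * C := by
    intro ε hε
    obtain ⟨δ, hδ, hunif⟩ := exists_pos_forall_dist_lt_of_isCompact hNp_neg hNp_add
      (isCompact_Icc (a := 0) (b := t)) (fun x _ => hcont x) hε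
    obtain ⟨n, u, hu, hu0, hut, hmesh⟩ := NNReal.exists_partition_dist_lt t hδ
    have hu_mem : ∀ i, u i ∈ Set.Icc 0 t := fun i => ⟨zero_le, hut ▸ hu (Fin.le_last i)⟩
    calc ‖M t - M 0‖ ^ 2 = ∑ i : Fin n, ‖M (u i.succ) - M (u i.castSucc)‖ ^ 2 := by
          rw [IsProjectionMartingale.sum_norm_sub_sq hmart hu, hu0, hut]
      _ ≤ ε * ∑ i : Fin n, Nq (M (u i.succ) - M (u i.castSucc)) :=
          sum_norm_sq_le_mul_sum hNq_nonneg hHolder _ _ fun i _ =>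
            (hunif _ (hu_mem _) _ (hmesh i)).le
      _ ≤ ε * C := mul_le_mul_of_nonneg_left (hC n u hu hu0 hut) hε.le
  have hlim : Tendsto (fun ε => ε * C) (𝓝[>] 0) (𝓝 0) :=
    ((continuous_mul_const C).tendsto' 0 0 (zero_mul C)).mono_left nhdsWithin_le_nhds
  have hzero : ‖M t - M 0‖ ^ 2 ≤ 0 := ge_of_tendsto hlim (eventually_nhdsWithin_of_forall hsmall)
  rw [← sub_eq_zero, ← norm_eq_zero]
  exact pow_eq_zero_iff two_ne_zero |>.1 (le_antisymm hzero (sq_nonneg _))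

/-- **A continuous martingale of finite variation is constant** (Proposition `prop.FVmart`).
Setting: a filtered C*-probability space `(A, (A_t)_{t≥0}, E)`, with `H = L²(A,E)` its
noncommutative `L²`-space (a complex Hilbert space), `V t = L²(A_t,E)` the closed subspaces
induced by the filtration, and conditional expectations acting on `L²` as the orthogonal
projections onto `V t`.  The noncommutative `L^p`- and `L^q`-norms (restricted to
`L^p(E) ∩ L^q(E) ⊆ L²(E)`, which contains the range of `M`) are `Np` and `Nq`; by
noncommutative Hölder's inequality, `1/p + 1/q ≤ 1` yields
`‖x‖₂² = ‖x⋆x‖₁ ≤ ‖x‖_p · ‖x‖_q` (hypothesis `hHolder`).  If the martingale `M` is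
`L^p`-continuous and has locally bounded variation with respect to the `L^q`-norm, then
`M t = M 0` for all `t ≥ 0`. -/
theorem continuous_finite_variation_martingale_constant
    {H : Type*} [NormedAddCommGroup H] [InnerProductSpace ℂ H]
    (V : ℝ≥0 → Submodule ℂ H) (hV : Monotone V) [∀ t, CompleteSpace (V t)]
    (p q : ℝ≥0∞) (hp : 1 ≤ p) (hq : 1 ≤ q) (hpq : 1 / p + 1 / q ≤ 1)
    (Np Nq : H → ℝ)
    (hNp_nonneg : ∀ x, 0 ≤ Np x) (hNq_nonneg : ∀ x, 0 ≤ Nq x)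
    (hNp_neg : ∀ x, Np (-x) = Np x) (hNq_neg : ∀ x, Nq (-x) = Nq x)
    (hNp_add : ∀ x y, Np (x + y) ≤ Np x + Np y)
    (hNq_add : ∀ x y, Nq (x + y) ≤ Nq x + Nq y)
    (hHolder : ∀ x : H, ‖x‖ ^ 2 ≤ Np x * Nq x)
    (M : ℝ≥0 → H)
    (hmart : ∀ s t : ℝ≥0, s ≤ t → ((V s).orthogonalProjectionOnto (M t) : H) = M s)
    (hcont : ∀ t : ℝ≥0, ∀ ε > (0 : ℝ), ∃ δ > (0 : ℝ), ∀ s : ℝ≥0,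
      dist s t < δ → Np (M s - M t) < ε)
    (hBV : ∀ t : ℝ≥0, ∃ C : ℝ, ∀ (n : ℕ) (u : Fin (n + 1) → ℝ≥0),
      Monotone u → u 0 = 0 → u (Fin.last n) = t →
      ∑ i : Fin n, Nq (M (u i.succ) - M (u i.castSucc)) ≤ C)
    (t : ℝ≥0) :
    M t = M 0 :=
  continuous_finite_variation_martingale_constant_general V Np Nq hNq_nonneg hNp_neg hNp_add hHolder
    M hmart hcont hBV t
end

section
/- Let (A, E_A) and (B, E_B) be filtered C*-probability spaces, let M : ℝ≥0 → L²(A,E_A) be a right-continuous L²-martingale, and let H = 1_{{0}}H₀ + Σ_{i=1}^k 1_{(s_i,t_i]}H_i be an elementary predictable process, where each H_i is a bounded real-linear map L²(E_A) → L²(E_B) satisfying the adaptedness condition: for u ≥ s_i, E_B[H_i x | B_u] = H_i E_A[x | A_u] for all x ∈ L²(E_A). Then the stochastic integral ∫₀^∞ H[dM] = Σᵢ H_i[M(t_i) - M(s_i)] satisfies ‖∫₀^∞ H[dM]‖₂² ≤ ∫_{(0,∞)} ‖H(t)‖²_{op} κ_M(dt), where κ_M is the measure with κ_M((s,t]) =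 ‖M(t)-M(s)‖₂² and ‖H(t)‖_op is the operator norm of H(t) : L² → L². -/
/-!
Refine all the intervals `(sᵢ, tᵢ]` to a common monotone grid `g 0 ≤ g 1 ≤ ⋯ ≤ g N` through their
endpoints. On the `j`-th cell `(g j, g (j+1)]` the integrand is a single operator `Gⱼ`, a sum of
those `Hᵢ` whose interval contains the cell, hence adapted at time `g j`, and the stochastic
integral becomes `∑ⱼ Gⱼ (M (g (j+1)) - M (g j))`. For `j < l` the `j`-th term lies in `L²(B_{g l})`
while the `l`-th is orthogonal to it, because `Gₗ` carries the martingale increment, which is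
orthogonal to `L²(A_{g l})`, to the orthogonal complement of `L²(B_{g l})`. Pythagoras and
`‖Gⱼ x‖ ≤ ‖Gⱼ‖ ‖x‖` with `‖M (g (j+1)) - M (g j)‖² = κ (g j, g (j+1)]` finish the estimate.
-/

open scoped NNReal ENNReal
open MeasureTheory Finset

theorem Finset.exists_monotone_enumeration {α : Type*} [LinearOrder α] [Nonempty α]
    (F : Finset α) :
    ∃ (N : ℕ) (g : ℕ → α), Monotone g ∧ ∀ p ∈ F, ∃ j ≤ N, g j = p := by
  rcases F.eq_empty_or_nonempty with rfl | hF
  · exact ⟨0, fun _ => Classical.arbitrary α, monotone_const, by simp⟩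
  have hcard : 0 < #F := hF.card_pos
  set e := F.orderEmbOfFin rfl
  refine ⟨#F - 1, fun j => e ⟨min j (#F - 1), by omega⟩, fun i j hij => e.monotone ?_, ?_⟩
  · simp only [Fin.mk_le_mk]; omega
  · intro p hp
    obtain ⟨j, rfl⟩ : p ∈ Set.range e := by rwa [range_orderEmbOfFin]
    exact ⟨j, by omega, congr_arg e (Fin.ext (by simp only; omega))⟩

theorem Monotone.apply_max_eq_right {α : Type*} [PartialOrder α] {g : ℕ → α}
    (hg : Monotone g) {a b : ℕ} (h : g a ≤ g b) : g (max a b) = g b := by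
  rcases le_total a b with hab | hba
  · rw [max_eq_right hab]
  · rw [max_eq_left hba]; exact le_antisymm h (hg hba)

theorem exists_monotone_grid {ι α : Type*} [Fintype ι] [LinearOrder α] [Nonempty α]
    (s t : ι → α) (hst : ∀ i, s i ≤ t i) :
    ∃ (N : ℕ) (g : ℕ → α) (a b : ι → ℕ),
      Monotone g ∧ (∀ i, a i ≤ b i ∧ b i ≤ N) ∧ g ∘ a = s ∧ g ∘ b = t := by
  obtain ⟨N, g, hg, hcover⟩ := (univ.image s ∪ univ.image t).exists_monotone_enumeration
  choose a haN ha using fun i => hcover (s i) (by simp)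
  choose b hbN hb using fun i => hcover (t i) (by simp)
  refine ⟨N, g, a, fun i => max (a i) (b i), hg,
    fun i => ⟨le_max_left _ _, max_le (haN i) (hbN i)⟩, funext ha, funext fun i => ?_⟩
  have hab : g (a i) ≤ g (b i) := by rw [ha, hb]; exact hst i
  simp only [Function.comp_apply, hg.apply_max_eq_right hab, hb]

theorem Monotone.mem_Ioc_iff_mem_Ico {α : Type*} [LinearOrder α] {g : ℕ → α}
    (hg : Monotone g) {j : ℕ} {u : α} (hu : u ∈ Set.Ioc (g j) (g (j + 1))) (a b : ℕ) :
    u ∈ Set.Ioc (g a) (g b) ↔ j ∈ Ico a b := by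
  obtain ⟨hju, huj⟩ := hu
  rw [Set.mem_Ioc, mem_Ico]
  constructor
  · rintro ⟨hau, hub⟩
    refine ⟨?_, ?_⟩
    · by_contra! hja
      exact (huj.trans (hg hja)).not_gt hau
    · by_contra! hbj
      exact (hub.trans (hg hbj)).not_gt hju
  · rintro ⟨haj, hjb⟩
    exact ⟨(hg haj).trans_lt hju, huj.trans (hg hjb)⟩

theorem Monotone.sum_indicator_Ioc_eq {ι α β : Type*} [Fintype ι] [LinearOrder α]
    [AddCommMonoid β] {g : ℕ → α} (hg : Monotone g) {j : ℕ} {u : α}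
    (hu : u ∈ Set.Ioc (g j) (g (j + 1))) (a b : ι → ℕ) (f : ι → β) :
    ∑ i, (Set.Ioc (g (a i)) (g (b i))).indicator (fun _ => f i) u =
      ∑ i with j ∈ Ico (a i) (b i), f i := by
  classical
  simp only [Set.indicator_apply, hg.mem_Ioc_iff_mem_Ico hu, sum_filter]

theorem sum_apply_sub_eq_sum_range {ι R E F : Type*} [Fintype ι] [Semiring R]
    [AddCommGroup E] [Module R E] [TopologicalSpace E]
    [AddCommGroup F] [Module R F] [TopologicalSpace F] [ContinuousAdd F]
    (Λ : ι → E →L[R] F) (x : ℕ → E) (a b : ι → ℕ) {N : ℕ} (hab : ∀ i, a i ≤ b i ∧ b i ≤ N) :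
    ∑ i, Λ i (x (b i) - x (a i)) =
      ∑ j ∈ range N, (∑ i with j ∈ Ico (a i) (b i), Λ i) (x (j + 1) - x j) := by
  simp only [_root_.sum_apply]
  simp_rw [← sum_Ico_sub x (hab _).1, map_sum]
  refine sum_comm' fun i j => ?_
  simp only [mem_univ, mem_filter, mem_range, mem_Ico, true_and]
  have := hab i
  omega

theorem norm_sq_sum_range_of_inner_eq_zero {𝕜 E : Type*} [RCLike 𝕜] [NormedAddCommGroup E]
    [InnerProductSpace 𝕜 E] (y : ℕ → E) (h : ∀ j l, j < l → inner 𝕜 (y j) (y l) = 0) (N : ℕ) :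
    ‖∑ j ∈ range N, y j‖ ^ 2 = ∑ j ∈ range N, ‖y j‖ ^ 2 := by
  induction N with
  | zero => simp
  | succ n ih =>
    have horth : inner 𝕜 (∑ j ∈ range n, y j) (y n) = 0 :=
      (sum_inner _ _ _).trans (sum_eq_zero fun j hj => h j n (mem_range.mp hj))
    rw [sum_range_succ, sum_range_succ, ← ih, sq, sq, sq,
      norm_add_sq_eq_norm_sq_add_norm_sq_of_inner_eq_zero _ _ horth]

theorem ContinuousLinearMap.ofReal_norm_apply_sq_le {𝕜 E F : Type*} [NontriviallyNormedField 𝕜]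
    [SeminormedAddCommGroup E] [SeminormedAddCommGroup F] [NormedSpace 𝕜 E] [NormedSpace 𝕜 F]
    (Λ : E →L[𝕜] F) (x : E) :
    ENNReal.ofReal (‖Λ x‖ ^ 2) ≤ ENNReal.ofReal (‖Λ‖ ^ 2) * ENNReal.ofReal (‖x‖ ^ 2) := by
  rw [← ENNReal.ofReal_mul (sq_nonneg _), ← mul_pow]
  exact ENNReal.ofReal_le_ofReal (pow_le_pow_left₀ (norm_nonneg _) (Λ.le_opNorm x) 2)

section Adapted

variable {ι : Type*} [Preorder ι] {HA HB : Type*}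
  [NormedAddCommGroup HA] [InnerProductSpace ℂ HA]
  [NormedAddCommGroup HB] [InnerProductSpace ℂ HB]
  (VA : ι → Submodule ℂ HA) [∀ u, (VA u).HasOrthogonalProjection]
  (VB : ι → Submodule ℂ HB) [∀ u, (VB u).HasOrthogonalProjection]

/-- The paper's `Λ ∈ F_r`, with the conditional expectations acting on `L²` as orthogonal
projections. -/
def IsAdaptedAt (r : ι) (Λ : HA →L[ℝ] HB) : Prop :=
  ∀ u, r ≤ u → ∀ x, (VB u).starProjection (Λ x) = Λ ((VA u).starProjection x)

variable {VA VB}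

theorem isAdaptedAt_sum {κ : Type*} {S : Finset κ} {r : ι} {Λ : κ → HA →L[ℝ] HB}
    (hΛ : ∀ i ∈ S, IsAdaptedAt VA VB r (Λ i)) : IsAdaptedAt VA VB r (∑ i ∈ S, Λ i) := by
  intro u hu x
  simp only [_root_.sum_apply, map_sum]
  exact sum_congr rfl fun i hi => hΛ i hi u hu x

theorem IsAdaptedAt.apply_mem {r u : ι} {Λ : HA →L[ℝ] HB} (hΛ : IsAdaptedAt VA VB r Λ)
    (hu : r ≤ u) {x : HA} (hx : x ∈ VA u) : Λ x ∈ VB u := by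
  rw [← Submodule.starProjection_eq_self_iff, hΛ u hu,
    Submodule.starProjection_eq_self_iff.mpr hx]

theorem IsAdaptedAt.apply_mem_orthogonal {r : ι} {Λ : HA →L[ℝ] HB}
    (hΛ : IsAdaptedAt VA VB r Λ) {x : HA} (hx : x ∈ (VA r)ᗮ) : Λ x ∈ (VB r)ᗮ := by
  rw [← Submodule.starProjection_apply_eq_zero_iff, hΛ r le_rfl,
    (VA r).starProjection_apply_eq_zero_iff.mpr hx, map_zero]

variable {M : ι → HA} (hVA : Monotone VA)
  (hmart : ∀ s t, s ≤ t → (VA s).starProjection (M t) = M s)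
include hmart

theorem sub_mem_orthogonal_of_starProjection_martingale {s t : ι} (hst : s ≤ t) :
    M t - M s ∈ (VA s)ᗮ := by
  rw [← Submodule.starProjection_apply_eq_zero_iff, map_sub, hmart s t hst, hmart s s le_rfl,
    sub_self]

include hVA

theorem mem_of_starProjection_martingale {s t : ι} (hst : s ≤ t) : M s ∈ VA t :=
  hVA hst (Submodule.starProjection_eq_self_iff.mp (hmart s s le_rfl))

theorem inner_adapted_increments_eq_zero {a b c d : ι} {Λ Λ' : HA →L[ℝ] HB}
    (hΛ : IsAdaptedAt VA VB a Λ) (hΛ' : IsAdaptedAt VA VB c Λ') (hab : a ≤ b) (hbc : b ≤ c)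
    (hcd : c ≤ d) : inner ℂ (Λ (M b - M a)) (Λ' (M d - M c)) = 0 := by
  have hfirst : Λ (M b - M a) ∈ VB c :=
    hΛ.apply_mem (hab.trans hbc) <| (VA c).sub_mem
      (mem_of_starProjection_martingale hVA hmart hbc)
      (mem_of_starProjection_martingale hVA hmart (hab.trans hbc))
  exact Submodule.inner_right_of_mem_orthogonal hfirst
    (hΛ'.apply_mem_orthogonal (sub_mem_orthogonal_of_starProjection_martingale hmart hcd))

theorem norm_sq_sum_adapted_increments {g : ℕ → ι} (hg : Monotone g)
    {G : ℕ → HA →L[ℝ] HB} (hG : ∀ j, IsAdaptedAt VA VB (g j) (G j)) (N : ℕ) :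
    ‖∑ j ∈ range N, G j (M (g (j + 1)) - M (g j))‖ ^ 2 =
      ∑ j ∈ range N, ‖G j (M (g (j + 1)) - M (g j))‖ ^ 2 :=
  norm_sq_sum_range_of_inner_eq_zero _ (fun j l hjl =>
    inner_adapted_increments_eq_zero hVA hmart (hG j) (hG l) (hg j.le_succ) (hg hjl)
      (hg l.le_succ)) N

end Adapted

theorem Monotone.sum_setLIntegral_Ioc_le {α : Type*} [LinearOrder α] [TopologicalSpace α]
    [OrderClosedTopology α] [MeasurableSpace α] [OpensMeasurableSpace α] {g : ℕ → α}
    (hg : Monotone g) {c : α} (hc : c ≤ g 0) (μ : Measure α) (f : α → ℝ≥0∞) (N : ℕ) :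
    ∑ j ∈ range N, ∫⁻ u in Set.Ioc (g j) (g (j + 1)), f u ∂μ ≤ ∫⁻ u in Set.Ioi c, f u ∂μ := by
  rw [← lintegral_biUnion_finset (t := fun j => Set.Ioc (g j) (g (j + 1)))
    (hg.pairwise_disjoint_on_Ioc_succ.set_pairwise _) fun _ _ => measurableSet_Ioc]
  refine lintegral_mono_set fun u hu => ?_
  obtain ⟨j, -, hju, -⟩ := Set.mem_iUnion₂.mp hu
  exact hc.trans_lt ((hg j.zero_le).trans_lt hju)

theorem elementary_ito_contraction_general
    {HA HB : Type*} [NormedAddCommGroup HA] [InnerProductSpace ℂ HA]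
    [NormedAddCommGroup HB] [InnerProductSpace ℂ HB]
    (VA : ℝ≥0 → Submodule ℂ HA) (hVA : Monotone VA) [∀ u, CompleteSpace (VA u)]
    (VB : ℝ≥0 → Submodule ℂ HB) [∀ u, CompleteSpace (VB u)]
    (M : ℝ≥0 → HA)
    (hmart : ∀ s t : ℝ≥0, s ≤ t → (Submodule.orthogonalProjectionOnto (VA s) (M t) : HA) = M s)
    (κ : Measure ℝ≥0)
    (hκ : ∀ s t : ℝ≥0, s ≤ t → κ (Set.Ioc s t) = ENNReal.ofReal (‖M t - M s‖ ^ 2))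
    (k : ℕ) (s t : Fin k → ℝ≥0) (hst : ∀ i, s i ≤ t i)
    (H0 : HA →L[ℝ] HB) (Hc : Fin k → (HA →L[ℝ] HB))
    (hHc : ∀ (i : Fin k) (u : ℝ≥0), s i ≤ u → ∀ x : HA,
      (Submodule.orthogonalProjectionOnto (VB u) (Hc i x) : HB) = Hc i (Submodule.orthogonalProjectionOnto (VA u) x)) :
    ENNReal.ofReal (‖∑ i : Fin k, Hc i (M (t i) - M (s i))‖ ^ 2) ≤
      ∫⁻ u in Set.Ioi (0 : ℝ≥0),
        ENNReal.ofReal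
          (‖(Set.indicator {0} (fun _ => H0) u +
              ∑ i : Fin k, Set.indicator (Set.Ioc (s i) (t i)) (fun _ => Hc i) u :
              HA →L[ℝ] HB)‖ ^ 2) ∂κ := by
  obtain ⟨N, g, a, b, hg, hab, rfl, rfl⟩ := exists_monotone_grid s t hst
  set H : ℝ≥0 → HA →L[ℝ] HB := fun u => Set.indicator {0} (fun _ => H0) u +
    ∑ i, Set.indicator (Set.Ioc (g (a i)) (g (b i))) (fun _ => Hc i) u
  set G : ℕ → HA →L[ℝ] HB := fun j => ∑ i with j ∈ Ico (a i) (b i), Hc i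
  have hG : ∀ j, IsAdaptedAt VA VB (g j) (G j) := fun j =>
    isAdaptedAt_sum fun i hi u hu =>
      hHc i u ((hg (mem_Ico.mp (mem_filter.mp hi).2).1).trans hu)
  have hH : ∀ j, ∀ u ∈ Set.Ioc (g j) (g (j + 1)), H u = G j := fun j u hu => by
    have hu0 : u ∉ ({0} : Set ℝ≥0) := (hu.1.trans_le' zero_le).ne'
    simp only [H, G, Set.indicator_of_notMem hu0, zero_add, hg.sum_indicator_Ioc_eq hu]
  calc ENNReal.ofReal (‖∑ i, Hc i (M (g (b i)) - M (g (a i)))‖ ^ 2)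
      = ENNReal.ofReal (‖∑ j ∈ range N, G j (M (g (j + 1)) - M (g j))‖ ^ 2) :=
        congrArg (fun y => ENNReal.ofReal (‖y‖ ^ 2))
          (sum_apply_sub_eq_sum_range Hc (M ∘ g) a b hab)
    _ = ∑ j ∈ range N, ENNReal.ofReal (‖G j (M (g (j + 1)) - M (g j))‖ ^ 2) := by
        rw [norm_sq_sum_adapted_increments hVA hmart hg hG,
          ENNReal.ofReal_sum_of_nonneg fun _ _ => sq_nonneg _]
    _ ≤ ∑ j ∈ range N, ∫⁻ u in Set.Ioc (g j) (g (j + 1)), ENNReal.ofReal (‖H u‖ ^ 2) ∂κ := by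
        gcongr with j
        rw [setLIntegral_congr_fun measurableSet_Ioc fun u hu => by rw [hH j u hu],
          setLIntegral_const, hκ _ _ (hg j.le_succ)]
        exact (G j).ofReal_norm_apply_sq_le _
    _ ≤ _ := hg.sum_setLIntegral_Ioc_le zero_le κ _ N

/-- **Noncommutative Itô contraction for elementary predictable integrands**
(Theorem `thm.Itocont`).
Setting: two filtered C*-probability spaces `(A, (A_t), E_A)` and `(B, (B_t), E_B)`; we model
their noncommutative `L²`-spaces as complex Hilbert spaces `HA = L²(E_A)` and `HB = L²(E_B)`,
with the filtrations inducing the monotone families of closed subspaces `VA t = L²(A_t,E_A)`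
and `VB t = L²(B_t,E_B)`, and the conditional expectations acting on `L²` as the orthogonal
projections onto these subspaces.  `M` is a right-continuous `L²`-martingale, `κ` is its
associated measure (`κ ((s,t]) = ‖M t - M s‖₂²`), and
`H = 1_{{0}} H₀ + ∑ i, 1_{(sᵢ,tᵢ]} Hᵢ` is an elementary predictable process: each `Hᵢ` is a
bounded real-linear map `L²(E_A) → L²(E_B)` intertwining the conditional expectations from
time `sᵢ` on (and `H₀` from time `0` on).  Then
`‖∑ i, Hᵢ (M tᵢ - M sᵢ)‖₂² ≤ ∫_(0,∞) ‖H(u)‖_op² κ(du)`. -/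
theorem elementary_ito_contraction
    {HA HB : Type*} [NormedAddCommGroup HA] [InnerProductSpace ℂ HA]
    [NormedAddCommGroup HB] [InnerProductSpace ℂ HB]
    (VA : ℝ≥0 → Submodule ℂ HA) (hVA : Monotone VA) [∀ u, CompleteSpace (VA u)]
    (VB : ℝ≥0 → Submodule ℂ HB) (hVB : Monotone VB) [∀ u, CompleteSpace (VB u)]
    (M : ℝ≥0 → HA)
    (hmart : ∀ s t : ℝ≥0, s ≤ t → (Submodule.orthogonalProjectionOnto (VA s) (M t) : HA) = M s)
    (hrc : ∀ t : ℝ≥0, ContinuousWithinAt M (Set.Ici t) t)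
    (κ : Measure ℝ≥0)
    (hκ : ∀ s t : ℝ≥0, s ≤ t → κ (Set.Ioc s t) = ENNReal.ofReal (‖M t - M s‖ ^ 2))
    (k : ℕ) (s t : Fin k → ℝ≥0) (hst : ∀ i, s i ≤ t i)
    (H0 : HA →L[ℝ] HB) (Hc : Fin k → (HA →L[ℝ] HB))
    (hH0 : ∀ u : ℝ≥0, ∀ x : HA,
      (Submodule.orthogonalProjectionOnto (VB u) (H0 x) : HB) = H0 (Submodule.orthogonalProjectionOnto (VA u) x))
    (hHc : ∀ (i : Fin k) (u : ℝ≥0), s i ≤ u → ∀ x : HA,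
      (Submodule.orthogonalProjectionOnto (VB u) (Hc i x) : HB) = Hc i (Submodule.orthogonalProjectionOnto (VA u) x)) :
    ENNReal.ofReal (‖∑ i : Fin k, Hc i (M (t i) - M (s i))‖ ^ 2) ≤
      ∫⁻ u in Set.Ioi (0 : ℝ≥0),
        ENNReal.ofReal
          (‖(Set.indicator {0} (fun _ => H0) u +
              ∑ i : Fin k, Set.indicator (Set.Ioc (s i) (t i)) (fun _ => Hc i) u :
              HA →L[ℝ] HB)‖ ^ 2) ∂κ :=
  elementary_ito_contraction_general VA hVA VB M hmart κ hκ k s t hst H0 Hc hHc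
end

section
/- Let (A,E_A), (B,E_B), (C,E_C) be filtered C*-probability spaces, let M : ℝ≥0 → L²(E_A) and N : ℝ≥0 → L²(E_B) be L²-martingales, and let Λ : ℝ≥0 → B₂(L²(E_A) × L²(E_B); L¹(E_C)) be an arbitrary bilinear process. Then for any t ≥ 0 and any partition Π of ℝ≥0, sup_{0≤s≤t} ‖Σ_{u∈Π} Λ(u_-)[M(u∧s)-M(u_-∧s), N(u∧s)-N(u_-∧s)]‖₁ ≤ (sup_{0≤s≤t} ‖Λ(s)‖_{2,2;1}) · ‖M(t)-M(0)‖₂ · ‖N(t)-N(0)‖₂. -/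
/-!
An increment `M d - M c` of a martingale is orthogonal to `V a` for every `a ≤ c`, so the
increments of `M` along a partition are pairwise orthogonal and, by Pythagoras, their squared
norms add up to at most `‖M t - M 0‖²`. Each summand of the Riemann–Stieltjes sum is bounded by
`‖Λ(u₋)‖ ‖Δ_u M‖ ‖Δ_u N‖`, and Cauchy–Schwarz over the partition finishes the proof. Partition
points beyond `t` carry no weight, since the stopped increments vanish there.
-/

open scoped NNReal ENNReal

def IsL2Martingale {ι 𝕜 E : Type*} [Preorder ι] [RCLike 𝕜] [NormedAddCommGroup E]
    [InnerProductSpace 𝕜 E] (V : ι → Submodule 𝕜 E) [∀ i, (V i).HasOrthogonalProjection]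
    (M : ι → E) : Prop :=
  ∀ s t, s ≤ t → ((V s).orthogonalProjectionOnto (M t) : E) = M s

namespace IsL2Martingale

variable {ι 𝕜 E : Type*} [Preorder ι] [RCLike 𝕜] [NormedAddCommGroup E] [InnerProductSpace 𝕜 E]
  {V : ι → Submodule 𝕜 E} [∀ i, (V i).HasOrthogonalProjection] {M : ι → E}

theorem mem (hM : IsL2Martingale V M) (a : ι) : M a ∈ V a := by
  rw [← hM a a le_rfl]
  exact Submodule.coe_mem _

theorem sub_mem_orthogonal (hM : IsL2Martingale V M) {a c d : ι} (hac : a ≤ c) (hcd : c ≤ d) :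
    M d - M c ∈ (V a)ᗮ := by
  rw [← Submodule.orthogonalProjectionOnto_eq_zero_iff]
  ext
  rw [map_sub, Submodule.coe_sub, hM a d (hac.trans hcd), hM a c hac, sub_self,
    Submodule.coe_zero]

theorem inner_sub_sub_eq_zero (hM : IsL2Martingale V M) {a b c : ι} (hab : a ≤ b)
    (hbc : b ≤ c) : inner 𝕜 (M b - M a) (M c - M b) = 0 := by
  rw [inner_sub_left,
    Submodule.inner_right_of_mem_orthogonal (hM.mem b) (hM.sub_mem_orthogonal le_rfl hbc),
    Submodule.inner_right_of_mem_orthogonal (hM.mem a) (hM.sub_mem_orthogonal hab hbc), sub_zero]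

theorem norm_sub_sq_eq_add (hM : IsL2Martingale V M) {a b c : ι} (hab : a ≤ b) (hbc : b ≤ c) :
    ‖M c - M a‖ ^ 2 = ‖M b - M a‖ ^ 2 + ‖M c - M b‖ ^ 2 := by
  have hsplit : M c - M a = (M b - M a) + (M c - M b) := by abel
  rw [hsplit, sq, sq, sq]
  exact norm_add_sq_eq_norm_sq_add_norm_sq_of_inner_eq_zero _ _ (hM.inner_sub_sub_eq_zero hab hbc)

theorem norm_sub_sq_le (hM : IsL2Martingale V M) {a b c d : ι} (hca : c ≤ a) (hab : a ≤ b)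
    (hbd : b ≤ d) : ‖M b - M a‖ ^ 2 ≤ ‖M d - M c‖ ^ 2 := by
  rw [hM.norm_sub_sq_eq_add hca (hab.trans hbd), hM.norm_sub_sq_eq_add hab hbd]
  linarith [sq_nonneg ‖M a - M c‖, sq_nonneg ‖M d - M b‖]

theorem sum_norm_sq_increments (hM : IsL2Martingale V M) {n : ℕ} {v : Fin (n + 1) → ι}
    (hv : Monotone v) :
    ∑ i : Fin n, ‖M (v i.succ) - M (v i.castSucc)‖ ^ 2 = ‖M (v (Fin.last n)) - M (v 0)‖ ^ 2 := by
  induction n with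
  | zero => simp
  | succ n ih =>
    have hinit : Monotone (v ∘ Fin.castSucc) := hv.comp Fin.strictMono_castSucc.monotone
    calc ∑ i : Fin (n + 1), ‖M (v i.succ) - M (v i.castSucc)‖ ^ 2
        = ∑ i : Fin n, ‖M ((v ∘ Fin.castSucc) i.succ) - M ((v ∘ Fin.castSucc) i.castSucc)‖ ^ 2 +
            ‖M (v (Fin.last (n + 1))) - M (v (Fin.last n).castSucc)‖ ^ 2 := by
          rw [Fin.sum_univ_castSucc]; rfl
      _ = ‖M (v (Fin.last (n + 1))) - M (v 0)‖ ^ 2 := by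
          rw [ih hinit]
          exact (hM.norm_sub_sq_eq_add (hv (Fin.zero_le _)) (hv (Fin.castSucc_le_succ _))).symm

theorem sum_norm_sq_increments_le (hM : IsL2Martingale V M) {n : ℕ} {v : Fin (n + 1) → ι}
    (hv : Monotone v) {c d : ι} (hc : c ≤ v 0) (hd : v (Fin.last n) ≤ d) :
    ∑ i : Fin n, ‖M (v i.succ) - M (v i.castSucc)‖ ^ 2 ≤ ‖M d - M c‖ ^ 2 :=
  (hM.sum_norm_sq_increments hv).trans_le (hM.norm_sub_sq_le hc (hv (Fin.zero_le _)) hd)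

theorem sum_norm_mul_norm_increments_le {F : Type*} [NormedAddCommGroup F]
    [InnerProductSpace 𝕜 F] {W : ι → Submodule 𝕜 F} [∀ i, (W i).HasOrthogonalProjection]
    {N : ι → F} (hM : IsL2Martingale V M) (hN : IsL2Martingale W N) {n : ℕ}
    {v : Fin (n + 1) → ι} (hv : Monotone v) {c d : ι} (hc : c ≤ v 0) (hd : v (Fin.last n) ≤ d) :
    ∑ i : Fin n, ‖M (v i.succ) - M (v i.castSucc)‖ * ‖N (v i.succ) - N (v i.castSucc)‖ ≤
      ‖M d - M c‖ * ‖N d - N c‖ := by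
  refine le_of_abs_le (abs_le_of_sq_le_sq ?_ (by positivity))
  calc (∑ i : Fin n, ‖M (v i.succ) - M (v i.castSucc)‖ * ‖N (v i.succ) - N (v i.castSucc)‖) ^ 2
      ≤ (∑ i : Fin n, ‖M (v i.succ) - M (v i.castSucc)‖ ^ 2) *
          ∑ i : Fin n, ‖N (v i.succ) - N (v i.castSucc)‖ ^ 2 :=
        Finset.sum_mul_sq_le_sq_mul_sq _ _ _
    _ ≤ ‖M d - M c‖ ^ 2 * ‖N d - N c‖ ^ 2 := by
        gcongr
        · exact hM.sum_norm_sq_increments_le hv hc hd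
        · exact hN.sum_norm_sq_increments_le hv hc hd
    _ = (‖M d - M c‖ * ‖N d - N c‖) ^ 2 := (mul_pow _ _ _).symm

end IsL2Martingale

theorem ENNReal.ofReal_norm_sum_le_mul_sum {ι E : Type*} [SeminormedAddCommGroup E]
    {s : Finset ι} {f : ι → E} {g : ι → ℝ} {S : ℝ≥0∞} (hg : ∀ i ∈ s, 0 ≤ g i)
    (hfg : ∀ i ∈ s, ENNReal.ofReal ‖f i‖ ≤ S * ENNReal.ofReal (g i)) :
    ENNReal.ofReal ‖∑ i ∈ s, f i‖ ≤ S * ENNReal.ofReal (∑ i ∈ s, g i) :=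
  calc ENNReal.ofReal ‖∑ i ∈ s, f i‖
      ≤ ENNReal.ofReal (∑ i ∈ s, ‖f i‖) := ENNReal.ofReal_le_ofReal (norm_sum_le _ _)
    _ = ∑ i ∈ s, ENNReal.ofReal ‖f i‖ :=
        ENNReal.ofReal_sum_of_nonneg fun i _ => norm_nonneg _
    _ ≤ ∑ i ∈ s, S * ENNReal.ofReal (g i) := Finset.sum_le_sum hfg
    _ = S * ENNReal.ofReal (∑ i ∈ s, g i) := by
        rw [← Finset.mul_sum, ENNReal.ofReal_sum_of_nonneg hg]

theorem ContinuousLinearMap.ofReal_norm_apply_apply_le {E F G : Type*}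
    [SeminormedAddCommGroup E] [NormedSpace ℝ E] [SeminormedAddCommGroup F] [NormedSpace ℝ F]
    [SeminormedAddCommGroup G] [NormedSpace ℝ G] (L : E →L[ℝ] F →L[ℝ] G) (x : E) (y : F) :
    ENNReal.ofReal ‖L x y‖ ≤ ENNReal.ofReal ‖L‖ * ENNReal.ofReal (‖x‖ * ‖y‖) := by
  rw [← ENNReal.ofReal_mul (norm_nonneg L), ← mul_assoc]
  exact ENNReal.ofReal_le_ofReal (L.le_opNorm₂ x y)

theorem quadratic_RS_sum_L1_bound_general
    {HA HB EC : Type*} [NormedAddCommGroup HA] [InnerProductSpace ℂ HA]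
    [NormedAddCommGroup HB] [InnerProductSpace ℂ HB]
    [NormedAddCommGroup EC] [NormedSpace ℝ EC]
    (VA : ℝ≥0 → Submodule ℂ HA) [∀ u, CompleteSpace (VA u)]
    (VB : ℝ≥0 → Submodule ℂ HB) [∀ u, CompleteSpace (VB u)]
    (M : ℝ≥0 → HA) (N : ℝ≥0 → HB)
    (hM : ∀ s t : ℝ≥0, s ≤ t → (Submodule.orthogonalProjectionOnto (VA s) (M t) : HA) = M s)
    (hN : ∀ s t : ℝ≥0, s ≤ t → (Submodule.orthogonalProjectionOnto (VB s) (N t) : HB) = N s)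
    (Λ : ℝ≥0 → (HA →L[ℝ] HB →L[ℝ] EC))
    (t : ℝ≥0) (n : ℕ) (u : Fin (n + 1) → ℝ≥0) (hu : Monotone u)
    (s : ℝ≥0) (hs : s ≤ t) :
    ENNReal.ofReal
        ‖∑ i : Fin n,
            Λ (u i.castSucc) (M (u i.succ ⊓ s) - M (u i.castSucc ⊓ s))
              (N (u i.succ ⊓ s) - N (u i.castSucc ⊓ s))‖ ≤
      (⨆ r ∈ Set.Icc (0 : ℝ≥0) t, ENNReal.ofReal ‖Λ r‖) *
        ENNReal.ofReal ‖M t - M 0‖ * ENNReal.ofReal ‖N t - N 0‖ := by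
  set S := ⨆ r ∈ Set.Icc (0 : ℝ≥0) t, ENNReal.ofReal ‖Λ r‖
  set v : Fin (n + 1) → ℝ≥0 := fun i => u i ⊓ s
  have hv : Monotone v := fun i j hij => inf_le_inf_right s (hu hij)
  set ΔM : Fin n → HA := fun i => M (v i.succ) - M (v i.castSucc)
  set ΔN : Fin n → HB := fun i => N (v i.succ) - N (v i.castSucc)
  have hterm : ∀ i : Fin n,
      ENNReal.ofReal ‖Λ (u i.castSucc) (ΔM i) (ΔN i)‖ ≤ S * ENNReal.ofReal (‖ΔM i‖ * ‖ΔN i‖) := by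
    intro i
    by_cases hi : u i.castSucc ≤ t
    · have hΛ : ENNReal.ofReal ‖Λ (u i.castSucc)‖ ≤ S :=
        le_iSup₂_of_le (u i.castSucc) ⟨zero_le, hi⟩ le_rfl
      exact ((Λ _).ofReal_norm_apply_apply_le _ _).trans (mul_le_mul_left hΛ _)
    · have hsu : s ≤ u i.castSucc := hs.trans (le_of_not_ge hi)
      have hstop : v i.succ = v i.castSucc := by
        simp only [v, inf_eq_right.mpr hsu, inf_eq_right.mpr (hsu.trans (hu i.castSucc_le_succ))]
      simp [ΔM, hstop]
  calc _ ≤ S * ENNReal.ofReal (∑ i, ‖ΔM i‖ * ‖ΔN i‖) :=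
        ENNReal.ofReal_norm_sum_le_mul_sum (fun _ _ => by positivity) fun i _ => hterm i
    _ ≤ S * ENNReal.ofReal (‖M t - M 0‖ * ‖N t - N 0‖) := by
        gcongr
        exact IsL2Martingale.sum_norm_mul_norm_increments_le (V := VA) (W := VB) hM hN hv
          zero_le (inf_le_right.trans hs)
    _ = S * ENNReal.ofReal ‖M t - M 0‖ * ENNReal.ofReal ‖N t - N 0‖ := by
        rw [ENNReal.ofReal_mul (norm_nonneg _), mul_assoc]

/-- **A priori `L¹`-bound for quadratic Riemann–Stieltjes sums of two `L²`-martingales**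
(Lemma `lem.cheapbd`).
Setting: filtered C*-probability spaces `(A,(A_t),E_A)`, `(B,(B_t),E_B)`, `(C,(C_t),E_C)`.
The noncommutative `L²`-spaces are modelled as complex Hilbert spaces `HA = L²(E_A)` and
`HB = L²(E_B)`, with filtrations inducing the monotone families of closed subspaces
`VA t, VB t` and conditional expectations acting as the orthogonal projections onto them;
`EC = L¹(E_C)` is a normed space.  `M` and `N` are `L²`-martingales and
`Λ : ℝ≥0 → B₂(L² × L²; L¹)` is an arbitrary bilinear process, `‖Λ u‖` being the bilinear
operator norm `‖Λ(u)‖_{2,2;1}`.  For every partition `Π = {0 = u₀ ≤ u₁ ≤ ⋯ ≤ u_n}` of `ℝ≥0`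
and every `s ∈ [0,t]`,
`‖∑_{u∈Π} Λ(u₋)[M(u∧s)-M(u₋∧s), N(u∧s)-N(u₋∧s)]‖₁
  ≤ (sup_{0≤r≤t} ‖Λ r‖) · ‖M t - M 0‖₂ · ‖N t - N 0‖₂`
(the supremum is taken in `[0,∞]`). -/
theorem quadratic_RS_sum_L1_bound
    {HA HB EC : Type*} [NormedAddCommGroup HA] [InnerProductSpace ℂ HA]
    [NormedAddCommGroup HB] [InnerProductSpace ℂ HB]
    [NormedAddCommGroup EC] [NormedSpace ℝ EC]
    (VA : ℝ≥0 → Submodule ℂ HA) (hVA : Monotone VA) [∀ u, CompleteSpace (VA u)]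
    (VB : ℝ≥0 → Submodule ℂ HB) (hVB : Monotone VB) [∀ u, CompleteSpace (VB u)]
    (M : ℝ≥0 → HA) (N : ℝ≥0 → HB)
    (hM : ∀ s t : ℝ≥0, s ≤ t → (Submodule.orthogonalProjectionOnto (VA s) (M t) : HA) = M s)
    (hN : ∀ s t : ℝ≥0, s ≤ t → (Submodule.orthogonalProjectionOnto (VB s) (N t) : HB) = N s)
    (Λ : ℝ≥0 → (HA →L[ℝ] HB →L[ℝ] EC))
    (t : ℝ≥0) (n : ℕ) (u : Fin (n + 1) → ℝ≥0) (hu : Monotone u) (hu0 : u 0 = 0)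
    (s : ℝ≥0) (hs : s ≤ t) :
    ENNReal.ofReal
        ‖∑ i : Fin n,
            Λ (u i.castSucc) (M (u i.succ ⊓ s) - M (u i.castSucc ⊓ s))
              (N (u i.succ ⊓ s) - N (u i.castSucc ⊓ s))‖ ≤
      (⨆ r ∈ Set.Icc (0 : ℝ≥0) t, ENNReal.ofReal ‖Λ r‖) *
        ENNReal.ofReal ‖M t - M 0‖ * ENNReal.ofReal ‖N t - N 0‖ :=
  quadratic_RS_sum_L1_bound_general VA VB M N hM hN Λ t n u hu s hs
end

section
/- Let V be a Banach space, I ⊆ ℝ a compact interval [a,b], μ a finite Borel measure on I, and H : I → V a bounded function possessing left limits at every point. For a partition Π of I let H^Π := 1_{{a}}H(a) + Σ_{t∈Π} 1_{(t_-,t]} H(t_-) be the left-endpoint discretization. Then for every p ∈ [1,∞), H^Π → H_- in L^p(I,μ;V) as |Π| → 0, where H_-(t) = lim_{s↗t}H(s) (with H_-(a) = H(a)). -/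
open MeasureTheory Filter Topology Set

/-!
On `(a, b]` the discretization takes the value `H(t)` for a partition point `t < x` within
one mesh of `x`, so it converges pointwise to the left limit `H₋`, and everywhere it is bounded
by `sup ‖H‖`. Dominated convergence on the finite measure `μ` then gives `L^p` convergence along
every sequence of partitions whose mesh tends to `0`, which is the `ε`–`δ` claim.
-/

noncomputable def leftEndpointDiscretization {V : Type*} [AddCommMonoid V] (H : ℝ → V) (a : ℝ)
    {n : ℕ} (u : Fin (n + 1) → ℝ) (x : ℝ) : V :=
  indicator {a} (fun _ => H a) x +
    ∑ i : Fin n, indicator (Ioc (u i.castSucc) (u i.succ)) (fun _ => H (u i.castSucc)) x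

theorem Fin.exists_castSucc_lt_and_le_succ {α : Type*} [LinearOrder α] {n : ℕ}
    {u : Fin (n + 1) → α} {x : α} (h0 : u 0 < x) (hlast : x ≤ u (Fin.last n)) :
    ∃ i : Fin n, u i.castSucc < x ∧ x ≤ u i.succ := by
  by_contra! hc
  have hlt : ∀ k : Fin (n + 1), u k < x := by
    intro k
    induction k using Fin.induction with
    | zero => exact h0
    | succ i ih => exact hc i ih
  exact (hlt (Fin.last n)).not_ge hlast

theorem sum_indicator_Ioc_eq_of_mem {α M : Type*} [Preorder α] [AddCommMonoid M] {n : ℕ}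
    {u : Fin (n + 1) → α} (hu : Monotone u) (c : Fin n → M) {x : α} {i : Fin n}
    (hx : x ∈ Ioc (u i.castSucc) (u i.succ)) :
    ∑ j : Fin n, (Ioc (u j.castSucc) (u j.succ)).indicator (fun _ => c j) x = c i := by
  rw [Finset.sum_eq_single_of_mem i (Finset.mem_univ i) fun j _ hji => ?_,
    indicator_of_mem hx]
  refine indicator_of_notMem (fun hxj => ?_) _
  rcases hji.lt_or_gt with hj | hj
  · exact (hxj.2.trans (hu (Fin.succ_le_castSucc_iff.2 hj))).not_gt hx.1
  · exact (hx.2.trans (hu (Fin.succ_le_castSucc_iff.2 hj))).not_gt hxj.1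

section LeftEndpointDiscretization

variable {V : Type*} {H : ℝ → V} {a b : ℝ} {n : ℕ} {u : Fin (n + 1) → ℝ}

theorem leftEndpointDiscretization_left [AddCommMonoid V] (H : ℝ → V) (hu : Monotone u)
    (h0 : u 0 = a) :
    leftEndpointDiscretization H a u a = H a := by
  have hnot : ∀ i : Fin n, a ∉ Ioc (u i.castSucc) (u i.succ) := fun i ha =>
    ha.1.not_ge (h0 ▸ hu (Fin.zero_le _))
  simp [leftEndpointDiscretization, indicator_of_notMem (hnot _)]

theorem exists_leftEndpointDiscretization_eq_of_mem_Ioc [AddCommMonoid V] (hu : Monotone u)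
    (h0 : u 0 = a) (hlast : u (Fin.last n) = b) {x : ℝ} (hx : x ∈ Ioc a b) :
    ∃ i : Fin n, x ∈ Ioc (u i.castSucc) (u i.succ) ∧
      leftEndpointDiscretization H a u x = H (u i.castSucc) := by
  obtain ⟨i, hi⟩ := Fin.exists_castSucc_lt_and_le_succ (h0 ▸ hx.1) (hlast ▸ hx.2)
  refine ⟨i, hi, ?_⟩
  rw [leftEndpointDiscretization, indicator_of_notMem (mem_singleton_iff.not.2 hx.1.ne'),
    zero_add]
  exact sum_indicator_Ioc_eq_of_mem hu (fun j => H (u j.castSucc)) hi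

theorem exists_leftEndpointDiscretization_eq_of_mesh_lt [AddCommMonoid V] {δ : ℝ}
    (hu : Monotone u) (h0 : u 0 = a) (hlast : u (Fin.last n) = b)
    (hmesh : ∀ i : Fin n, u i.succ - u i.castSucc < δ) {x : ℝ} (hx : x ∈ Ioc a b) :
    ∃ t ∈ Ico a x, x - t < δ ∧ leftEndpointDiscretization H a u x = H t := by
  obtain ⟨i, hi, hdisc⟩ :=
    exists_leftEndpointDiscretization_eq_of_mem_Ioc (H := H) hu h0 hlast hx
  exact ⟨u i.castSucc, ⟨h0 ▸ hu (Fin.zero_le _), hi.1⟩, by linarith [hmesh i, hi.2], hdisc⟩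

theorem norm_leftEndpointDiscretization_le [SeminormedAddCommGroup V] {C : ℝ}
    (hC : ∀ x ∈ Icc a b, ‖H x‖ ≤ C) (hu : Monotone u) (h0 : u 0 = a)
    (hlast : u (Fin.last n) = b) {x : ℝ} (hx : x ∈ Icc a b) :
    ‖leftEndpointDiscretization H a u x‖ ≤ C := by
  rcases hx.1.eq_or_lt with rfl | hax
  · rw [leftEndpointDiscretization_left H hu h0]
    exact hC _ hx
  · obtain ⟨i, hi, hdisc⟩ :=
      exists_leftEndpointDiscretization_eq_of_mem_Ioc (H := H) hu h0 hlast ⟨hax, hx.2⟩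
    rw [hdisc]
    exact hC _ ⟨h0 ▸ hu (Fin.zero_le _), hi.1.le.trans hx.2⟩

theorem stronglyMeasurable_leftEndpointDiscretization [TopologicalSpace V] [AddCommMonoid V]
    [ContinuousAdd V] (H : ℝ → V) (a : ℝ) (u : Fin (n + 1) → ℝ) :
    StronglyMeasurable (leftEndpointDiscretization H a u) :=
  (stronglyMeasurable_const.indicator (measurableSet_singleton a)).add
    (Finset.stronglyMeasurable_fun_sum _ fun _ _ =>
      stronglyMeasurable_const.indicator measurableSet_Ioc)

end LeftEndpointDiscretization

theorem tendsto_nhdsLT_of_lt_of_sub_lt {ι : Type*} {l : Filter ι} {t δ : ι → ℝ} {x : ℝ}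
    (hlt : ∀ k, t k < x) (hsub : ∀ k, x - t k < δ k) (hδ : Tendsto δ l (𝓝 0)) :
    Tendsto t l (𝓝[<] x) := by
  refine tendsto_nhdsWithin_of_tendsto_nhds_of_eventually_within _ ?_ (Eventually.of_forall hlt)
  have hlower : Tendsto (fun k => x - δ k) l (𝓝 x) := by
    simpa using tendsto_const_nhds.sub hδ
  exact tendsto_of_tendsto_of_tendsto_of_le_of_le hlower tendsto_const_nhds
    (fun k => by linarith [hsub k]) (fun k => (hlt k).le)

theorem tendsto_lintegral_norm_sub_rpow_of_tendsto_ae {α V : Type*} [MeasurableSpace α]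
    [NormedAddCommGroup V] {μ : Measure α} [IsFiniteMeasure μ] {F : ℕ → α → V} {G : α → V}
    {C p : ℝ} (hp : 0 < p) (hF : ∀ k, AEStronglyMeasurable (F k) μ)
    (hbound : ∀ k, ∀ᵐ x ∂μ, ‖F k x‖ ≤ C)
    (hlim : ∀ᵐ x ∂μ, Tendsto (fun k => F k x) atTop (𝓝 (G x))) :
    Tendsto (fun k => ∫⁻ x, ENNReal.ofReal (‖F k x - G x‖ ^ p) ∂μ) atTop (𝓝 0) := by
  have hG : AEStronglyMeasurable G μ := aestronglyMeasurable_of_tendsto_ae atTop hF hlim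
  have hGbound : ∀ᵐ x ∂μ, ‖G x‖ ≤ C := by
    filter_upwards [hlim, ae_all_iff.2 hbound] with x hx hxC
    exact le_of_tendsto' hx.norm hxC
  have hmeas : ∀ k, AEMeasurable (fun x => ENNReal.ofReal (‖F k x - G x‖ ^ p)) μ := fun k =>
    ENNReal.measurable_ofReal.comp_aemeasurable
      (((hF k).sub hG).norm.aemeasurable.pow_const p)
  have hdom : ∀ k, (fun x => ENNReal.ofReal (‖F k x - G x‖ ^ p)) ≤ᵐ[μ]
      fun _ => ENNReal.ofReal ((2 * C) ^ p) := by
    intro k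
    filter_upwards [hbound k, hGbound] with x hFx hGx
    refine ENNReal.ofReal_le_ofReal (Real.rpow_le_rpow (norm_nonneg _) ?_ hp.le)
    linarith [norm_sub_le (F k x) (G x)]
  have hlim' : ∀ᵐ x ∂μ,
      Tendsto (fun k => ENNReal.ofReal (‖F k x - G x‖ ^ p)) atTop (𝓝 0) := by
    filter_upwards [hlim] with x hx
    have hnorm : Tendsto (fun k => ‖F k x - G x‖) atTop (𝓝 0) := by
      simpa using (hx.sub (tendsto_const_nhds (x := G x))).norm
    simpa [Real.zero_rpow hp.ne'] using
      ENNReal.tendsto_ofReal (hnorm.rpow_const (Or.inr hp.le))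
  simpa using tendsto_lintegral_of_dominated_convergence' _ hmeas hdom
    (by rw [lintegral_const]; exact ENNReal.mul_ne_top ENNReal.ofReal_ne_top (measure_ne_top _ _))
    hlim'

theorem left_endpoint_discretization_Lp_convergence_general
    {V : Type*} [NormedAddCommGroup V]
    (a b : ℝ)
    (μ : Measure ℝ) [IsFiniteMeasure μ]
    (H Hm : ℝ → V)
    (hbdd : ∃ C : ℝ, ∀ x ∈ Set.Icc a b, ‖H x‖ ≤ C)
    (hHma : Hm a = H a)
    (hleft : ∀ t ∈ Set.Ioc a b,
      Filter.Tendsto H (nhdsWithin t (Set.Iio t)) (nhds (Hm t)))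
    (p : ℝ) (hp : 1 ≤ p) :
    ∀ ε > (0 : ℝ), ∃ δ > (0 : ℝ), ∀ (n : ℕ) (u : Fin (n + 1) → ℝ),
      Monotone u → u 0 = a → u (Fin.last n) = b →
      (∀ i : Fin n, u i.succ - u i.castSucc < δ) →
      ∫⁻ x in Set.Icc a b,
          ENNReal.ofReal
            (‖(Set.indicator {a} (fun _ => H a) x +
                ∑ i : Fin n,
                  Set.indicator (Set.Ioc (u i.castSucc) (u i.succ))
                    (fun _ => H (u i.castSucc)) x) - Hm x‖ ^ p) ∂μ
        < ENNReal.ofReal ε := by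
  obtain ⟨C, hC⟩ := hbdd
  intro ε hε
  by_contra! hfar
  choose n u hu h0 hlast hmesh hlarge using fun k : ℕ => hfar (1 / (k + 1 : ℝ)) (by positivity)
  have hlim : ∀ x ∈ Icc a b,
      Tendsto (fun k => leftEndpointDiscretization H a (u k) x) atTop (𝓝 (Hm x)) := by
    intro x hx
    rcases hx.1.eq_or_lt with rfl | hax
    · simp [leftEndpointDiscretization_left H (hu _) (h0 _), hHma]
    choose t ht hsub hdisc using fun k => exists_leftEndpointDiscretization_eq_of_mesh_lt
      (H := H) (hu k) (h0 k) (hlast k) (hmesh k) ⟨hax, hx.2⟩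
    have ht_lim := tendsto_nhdsLT_of_lt_of_sub_lt (fun k => (ht k).2) hsub
      tendsto_one_div_add_atTop_nhds_zero_nat
    simpa only [hdisc, Function.comp_def] using (hleft x ⟨hax, hx.2⟩).comp ht_lim
  have hsmall := tendsto_lintegral_norm_sub_rpow_of_tendsto_ae (μ := μ.restrict (Icc a b))
    (p := p) (by linarith)
    (fun k => (stronglyMeasurable_leftEndpointDiscretization H a (u k)).aestronglyMeasurable)
    (fun k => ae_restrict_of_forall_mem measurableSet_Icc fun _ =>
      norm_leftEndpointDiscretization_le hC (hu k) (h0 k) (hlast k))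
    (ae_restrict_of_forall_mem measurableSet_Icc hlim)
  exact (ENNReal.ofReal_pos.2 hε).not_ge (ge_of_tendsto' hsmall hlarge)

/-- **`L^p`-convergence of left-endpoint discretizations to the left-limit function**
(Proposition `prop.HPi (iii)`).  Let `V` be a Banach space, `I = [a,b]` a compact interval,
`μ` a finite Borel measure, and `H : I → V` a bounded function possessing left limits at
every point; let `H₋` denote its left-limit function (`H₋(a) = H(a)` and
`H₋(t) = lim_{s↗t} H(s)` for `t ∈ (a,b]`).  For a partition
`Π = {a = u₀ ≤ ⋯ ≤ u_n = b}` of `I`, let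
`H^Π = 1_{{a}} H(a) + ∑_{t∈Π} 1_{(t₋,t]} H(t₋)` be the left-endpoint discretization.  Then
for every `p ∈ [1,∞)`, `H^Π → H₋` in `L^p(I,μ;V)` as the mesh `|Π| → 0`. -/
theorem left_endpoint_discretization_Lp_convergence
    {V : Type*} [NormedAddCommGroup V] [CompleteSpace V]
    (a b : ℝ) (hab : a < b)
    (μ : Measure ℝ) [IsFiniteMeasure μ]
    (H Hm : ℝ → V)
    (hbdd : ∃ C : ℝ, ∀ x ∈ Set.Icc a b, ‖H x‖ ≤ C)
    (hHma : Hm a = H a)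
    (hleft : ∀ t ∈ Set.Ioc a b,
      Filter.Tendsto H (nhdsWithin t (Set.Iio t)) (nhds (Hm t)))
    (p : ℝ) (hp : 1 ≤ p) :
    ∀ ε > (0 : ℝ), ∃ δ > (0 : ℝ), ∀ (n : ℕ) (u : Fin (n + 1) → ℝ),
      Monotone u → u 0 = a → u (Fin.last n) = b →
      (∀ i : Fin n, u i.succ - u i.castSucc < δ) →
      ∫⁻ x in Set.Icc a b,
          ENNReal.ofReal
            (‖(Set.indicator {a} (fun _ => H a) x +
                ∑ i : Fin n,
                  Set.indicator (Set.Ioc (u i.castSucc) (u i.succ))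
                    (fun _ => H (u i.castSucc)) x) - Hm x‖ ^ p) ∂μ
        < ENNReal.ofReal ε :=
  left_endpoint_discretization_Lp_convergence_general a b μ H Hm hbdd hHma hleft p hp
end

section
/- Let (A,E_A) and (B,E_B) be filtered C*-probability spaces, M : ℝ≥0 → L^p(E_A) an L^p-martingale (p ∈ [1,∞)), and H = 1_{{0}}H₀ + Σᵢ 1_{(sᵢ,tᵢ]}Hᵢ an elementary predictable process with each Hᵢ : L^p(E_A) → L^q(E_B) a bounded linear map satisfying E_B[Hᵢ x | B_u] = Hᵢ E_A[x | A_u] for all u ≥ sᵢ. Then the elementary stochastic integral t ↦ ∫₀^t H[dM] = Σᵢ Hᵢ[M(tᵢ∧t) - M(sᵢ∧t)] is an L^q-martingale with respect to (B_t)_{t≥0}. -/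
open scoped NNReal

/-- **The elementary stochastic integral against a martingale is a martingale**
(Lemma `lem.elemint (v)`).  Setting: two filtered C*-probability spaces
`(A,(A_t),E_A)` and `(B,(B_t),E_B)`; `V` and `W` model the noncommutative spaces
`L^p(E_A)` and `L^q(E_B)`, with the conditional expectations `EA u = E_A[·|A_u]` and
`EB u = E_B[·|B_u]` acting on them as (linear) maps — `EB` satisfying the tower property,
elements of `L^q(B_u,E_B)` being exactly those fixed by `EB u`.
`M` is an `L^p`-martingale (adapted, with `EA s (M t) = M s` for `s ≤ t`), and
`H = 1_{{0}}H₀ + ∑ᵢ 1_{(sᵢ,tᵢ]}Hᵢ` is an elementary predictable process: each `Hᵢ` is a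
bounded linear map `L^p(E_A) → L^q(E_B)` intertwining the conditional expectations from time
`sᵢ` on.  Then the elementary stochastic integral
`N : r ↦ ∫₀^r H[dM] = ∑ᵢ Hᵢ (M (tᵢ∧r) - M (sᵢ∧r))` is an `L^q`-martingale with respect to
`(B_t)`: it is adapted (`EB r (N r) = N r`) and `EB r (N u) = N r` for `r ≤ u`. -/
theorem elementary_stochastic_integral_is_martingale
    {V W : Type*} [NormedAddCommGroup V] [NormedSpace ℂ V]
    [NormedAddCommGroup W] [NormedSpace ℂ W]
    (EA : ℝ≥0 → V →L[ℝ] V) (EB : ℝ≥0 → W →L[ℝ] W)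
    (hEBtower : ∀ s u : ℝ≥0, s ≤ u → ∀ y : W, EB s (EB u y) = EB s y)
    (M : ℝ≥0 → V)
    (hMmart : ∀ s t : ℝ≥0, s ≤ t → EA s (M t) = M s)
    (hMadapted : ∀ v u : ℝ≥0, v ≤ u → EA u (M v) = M v)
    (k : ℕ) (s t : Fin k → ℝ≥0) (hst : ∀ i, s i ≤ t i)
    (Hc : Fin k → (V →L[ℝ] W))
    (hHc : ∀ (i : Fin k) (u : ℝ≥0), s i ≤ u → ∀ x : V, EB u (Hc i x) = Hc i (EA u x)) :
    (∀ u : ℝ≥0,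
      EB u (∑ i : Fin k, Hc i (M (t i ⊓ u) - M (s i ⊓ u))) =
        ∑ i : Fin k, Hc i (M (t i ⊓ u) - M (s i ⊓ u))) ∧
    (∀ r u : ℝ≥0, r ≤ u →
      EB r (∑ i : Fin k, Hc i (M (t i ⊓ u) - M (s i ⊓ u))) =
        ∑ i : Fin k, Hc i (M (t i ⊓ r) - M (s i ⊓ r))) := by
  have hEA : ∀ (r u c : ℝ≥0), r ≤ u → EA r (M (c ⊓ u)) = M (c ⊓ r) := by
    intro r u c hru
    rcases le_total r (c ⊓ u) with h | h
    · have hrc : r ≤ c := le_trans h inf_le_left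
      rw [inf_eq_right.mpr hrc, hMmart r _ h]
    · have h2 : c ⊓ u = c ⊓ r := by
        rcases le_total c u with hc | hc
        · rw [inf_eq_left.mpr hc] at h ⊢
          rw [inf_eq_left.mpr h]
        · have hur : u ≤ r := by rw [inf_eq_right.mpr hc] at h; exact h
          rw [le_antisymm hur hru]
      rw [h2, hMadapted _ r inf_le_right]
  have key : ∀ (r u : ℝ≥0), r ≤ u → ∀ i : Fin k,
      EB r (Hc i (M (t i ⊓ u) - M (s i ⊓ u))) = Hc i (M (t i ⊓ r) - M (s i ⊓ r)) := by
    intro r u hru i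
    rcases le_total (s i) r with hsr | hrs
    · rw [hHc i r hsr, map_sub, hEA r u _ hru, hEA r u _ hru]
    · have htr : t i ⊓ r = r := inf_eq_right.mpr (le_trans hrs (hst i))
      have hsr' : s i ⊓ r = r := inf_eq_right.mpr hrs
      rw [htr, hsr', sub_self, map_zero]
      rcases le_total u (s i) with hus | hsu
      · have h1 : t i ⊓ u = u := inf_eq_right.mpr (le_trans hus (hst i))
        have h2 : s i ⊓ u = u := inf_eq_right.mpr hus
        rw [h1, h2, sub_self, map_zero, map_zero]
      · rw [← hEBtower r (s i) hrs, hHc i (s i) le_rfl, map_sub,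
          hEA (s i) u (t i) hsu, hEA (s i) u (s i) hsu,
          inf_eq_right.mpr (hst i), inf_idem, sub_self, map_zero, map_zero]
  constructor
  · intro u
    rw [map_sum]
    exact Finset.sum_congr rfl fun i _ => key u u le_rfl i
  · intro r u hru
    rw [map_sum]
    exact Finset.sum_congr rfl fun i _ => key r u hru i
end
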